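/- arXiv:1503.00710 — 2 statements merged into one kernel-verified Lean document; each statement's English description precedes it below -/
import Mathlib

section
/- For a finite Coxeter group W with Coxeter element c, the Kreweras complement Krew_c(w) := c w⁻¹ maps the interval NC(W,c) = [1,c] in absolute order to itself and is an anti-automorphism of the poset: u ≤_R w implies Krew_c(w) ≤_R Krew_c(u). -/
namespace CoxeterSystem

variable {B W : Type*} [Group W] {M : CoxeterMatrix B} (cs : CoxeterSystem M W)

/-- The absolute (reflection) length of `w`: the minimal length of an expression of `w`
as a product of reflections. -/
noncomputable def absLength (w : W) : ℕ :=
  sInf {n : ℕ | ∃ l : List W, (∀ t ∈ l, cs.IsReflection t) ∧ l.prod = w ∧ l.length = n}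

/-- The absolute order on `W`: `u ≤_R w` iff `ℓ_R(u) + ℓ_R(u⁻¹w) = ℓ_R(w)`. -/
def absLe (u w : W) : Prop :=
  cs.absLength u + cs.absLength (u⁻¹ * w) = cs.absLength w

/-- `c` is a (standard) Coxeter element: the product of all the simple reflections, each
occurring exactly once, in some order. -/
def IsCoxeterElement (c : W) : Prop :=
  ∃ l : List B, l.Nodup ∧ (∀ i : B, i ∈ l) ∧ cs.wordProd l = c

theorem absLength_conj_subset (x w : W) :
    {n : ℕ | ∃ l : List W, (∀ t ∈ l, cs.IsReflection t) ∧ l.prod = w ∧ l.length = n} ⊆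
    {n : ℕ | ∃ l : List W, (∀ t ∈ l, cs.IsReflection t) ∧ l.prod = x * w * x⁻¹ ∧
      l.length = n} := by
  rintro n ⟨l, hl, hprod, hlen⟩
  refine ⟨l.map (fun t => x * t * x⁻¹), ?_, ?_, by simp [hlen]⟩
  · intro t ht
    obtain ⟨t', ht', rfl⟩ := List.mem_map.mp ht
    exact (hl t' ht').conj x
  · have : (fun t => x * t * x⁻¹) = (MulAut.conj x : W →* W) := by
      ext t; simp [MulAut.conj_apply]
    rw [this, ← map_list_prod, hprod]
    simp [MulAut.conj_apply]

theorem absLength_conj (x w : W) : cs.absLength (x * w * x⁻¹) = cs.absLength w := by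
  unfold absLength
  congr 1
  apply Set.Subset.antisymm
  · intro n h
    have := absLength_conj_subset cs x⁻¹ (x * w * x⁻¹) h
    simpa [mul_assoc] using this
  · exact absLength_conj_subset cs x w

end CoxeterSystem

/-- The Kreweras complement `Krew_c(w) = c * w⁻¹` maps the interval
`NC(W, c) = [1, c]` in absolute order to itself and is an anti-automorphism:
`u ≤_R w` implies `Krew_c(w) ≤_R Krew_c(u)`. -/
theorem kreweras_antiAutomorphism_NC {B W : Type*} [Group W]
    (M : CoxeterMatrix B) (cs : CoxeterSystem M W) [Finite W] (c : W)
    (hc : cs.IsCoxeterElement c) :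
    (∀ w : W, cs.absLe w c → cs.absLe (c * w⁻¹) c) ∧
    ∀ u w : W, cs.absLe u c → cs.absLe w c → cs.absLe u w →
      cs.absLe (c * w⁻¹) (c * u⁻¹) := by
  have hconj : ∀ v : W, cs.absLength (c * v⁻¹) = cs.absLength (v⁻¹ * c) := by
    intro v
    have : c * v⁻¹ = c * (v⁻¹ * c) * c⁻¹ := by group
    rw [this, cs.absLength_conj]
  constructor
  · intro w hw
    unfold CoxeterSystem.absLe at hw ⊢
    have h1 : (c * w⁻¹)⁻¹ * c = w := by group
    rw [h1, hconj]
    omega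
  · intro u w hu hw huw
    unfold CoxeterSystem.absLe at hu hw huw ⊢
    have h1 : (c * w⁻¹)⁻¹ * (c * u⁻¹) = w * u⁻¹ := by group
    have h2 : cs.absLength (w * u⁻¹) = cs.absLength (u⁻¹ * w) := by
      have hh : w * u⁻¹ = w * (u⁻¹ * w) * w⁻¹ := by group
      rw [hh, cs.absLength_conj]
    rw [h1, h2, hconj, hconj]
    omega
end

section
/- For a finite Coxeter group W of rank n with degrees d₁ ≤ ⋯ ≤ d_n and Coxeter number h = d_n, the number of elements of W lying below the Coxeter element c in absolute order (for the dihedral group I₂(m), say) equals the Catalan number Cat(W) = ∏ᵢ (h + dᵢ)/dᵢ; in particular, for the dihedral group I₂(k) with degrees 2, k and h = k, the interval [1, c] in absolute order has exactly k + 2 elements. -/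
/-- The Coxeter matrix of the dihedral type `I₂(k)` for `k ≥ 2`. -/
def I2Matrix (k : ℕ) (hk : 2 ≤ k) : CoxeterMatrix (Fin 2) where
  M := Matrix.of fun i j => if i = j then 1 else k
  isSymm := by
    unfold Matrix.IsSymm
    ext i j
    by_cases h : i = j
    · simp [h]
    · have h' : j ≠ i := fun e => h e.symm
      simp [Matrix.transpose_apply, h, h']
  diagonal := by simp
  off_diagonal := by
    intro i j h
    simp only [Matrix.of_apply, if_neg h]
    omega

/-! In a rank-two Coxeter group with `c = s₀ s₁`, every element is a rotation `cⁱ` or a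
reflection `cⁱ s₀`, and rotations have even length, so the reflections form the coset `⟨c⟩ s₀`
and there are `orderOf c = m₀₁` of them. A reflection `t` lies below `c` because `t⁻¹ c = t c` is
again a reflection, while a rotation `≠ 1` has absolute length `2` and so lies below `c` only if it
is `c` itself. Hence `[1, c] = {1, c} ⊔ {reflections}` has `m₀₁ + 2` elements. -/

namespace CoxeterSystem

section AbsoluteLength

variable {B W : Type*} [Group W] {M : CoxeterMatrix B} (cs : CoxeterSystem M W)

theorem absLength_prod_le {l : List W} (hl : ∀ t ∈ l, cs.IsReflection t) :
    cs.absLength l.prod ≤ l.length :=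
  Nat.sInf_le ⟨l, hl, rfl, rfl⟩

theorem exists_reflection_list_prod_eq (w : W) :
    ∃ l : List W, (∀ t ∈ l, cs.IsReflection t) ∧ l.prod = w ∧ l.length = cs.absLength w := by
  refine Nat.sInf_mem (s := {n : ℕ | ∃ l : List W,
    (∀ t ∈ l, cs.IsReflection t) ∧ l.prod = w ∧ l.length = n}) ?_
  obtain ⟨ω, rfl⟩ := cs.wordProd_surjective w
  exact ⟨_, ω.map cs.simple, by simpa using fun i _ => cs.isReflection_simple i, rfl, rfl⟩

@[simp]
theorem absLength_one : cs.absLength 1 = 0 :=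
  Nat.le_zero.mp (cs.absLength_prod_le (l := []) (by simp))

theorem absLength_eq_zero_iff {w : W} : cs.absLength w = 0 ↔ w = 1 := by
  refine ⟨fun h => ?_, fun h => h ▸ cs.absLength_one⟩
  obtain ⟨l, -, rfl, hl⟩ := cs.exists_reflection_list_prod_eq w
  simp [List.length_eq_zero_iff.mp (hl.trans h)]

variable {cs} in
theorem IsReflection.ne_one {t : W} (ht : cs.IsReflection t) : t ≠ 1 := by
  rintro rfl
  simpa using ht.odd_length

variable {cs} in
theorem IsReflection.lengthParity_eq {t : W} (ht : cs.IsReflection t) :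
    cs.lengthParity t = Multiplicative.ofAdd 1 := by
  rw [lengthParity_eq_ofAdd_length, ZMod.natCast_eq_one_iff_odd.mpr ht.odd_length]

theorem absLength_eq_one_iff {w : W} : cs.absLength w = 1 ↔ cs.IsReflection w := by
  constructor
  · intro h
    obtain ⟨l, hl, rfl, hlen⟩ := cs.exists_reflection_list_prod_eq w
    obtain ⟨t, rfl⟩ := List.length_eq_one_iff.mp (hlen.trans h)
    simpa using hl
  · intro hw
    have hle : cs.absLength w ≤ 1 := by simpa using cs.absLength_prod_le (l := [w]) (by simpa)
    have hne : cs.absLength w ≠ 0 := cs.absLength_eq_zero_iff.not.mpr hw.ne_one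
    omega

theorem absLength_mul_eq_two {t₁ t₂ : W} (h₁ : cs.IsReflection t₁) (h₂ : cs.IsReflection t₂)
    (hne : t₁ * t₂ ≠ 1) (hnr : ¬ cs.IsReflection (t₁ * t₂)) :
    cs.absLength (t₁ * t₂) = 2 := by
  have hle : cs.absLength (t₁ * t₂) ≤ 2 := by
    simpa using cs.absLength_prod_le (l := [t₁, t₂]) (by simp [h₁, h₂])
  have h0 : cs.absLength (t₁ * t₂) ≠ 0 := cs.absLength_eq_zero_iff.not.mpr hne
  have h1 : cs.absLength (t₁ * t₂) ≠ 1 := cs.absLength_eq_one_iff.not.mpr hnr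
  omega

theorem absLe_one_left (w : W) : cs.absLe 1 w := by
  simp [absLe]

theorem absLe_refl (w : W) : cs.absLe w w := by
  simp [absLe]

end AbsoluteLength

theorem _root_.CoxeterMatrix.isLiftable_dihedralGroup_sr (M : CoxeterMatrix (Fin 2)) :
    M.IsLiftable fun i : Fin 2 => DihedralGroup.sr (i.val : ZMod (M 0 1)) := by
  intro i i'
  rw [DihedralGroup.sr_mul_sr, DihedralGroup.r_pow, DihedralGroup.one_def, DihedralGroup.r.injEq]
  fin_cases i <;> fin_cases i' <;> simp [M.symmetric 1 0]

section Dihedral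

variable {W : Type*} [Group W] {M : CoxeterMatrix (Fin 2)} (cs : CoxeterSystem M W)

theorem orderOf_simple_zero_mul_simple_one : orderOf (cs.simple 0 * cs.simple 1) = M 0 1 := by
  refine Nat.dvd_antisymm (orderOf_dvd_of_pow_eq_one (cs.simple_mul_simple_pow 0 1)) ?_
  have h := orderOf_map_dvd (cs.lift ⟨_, M.isLiftable_dihedralGroup_sr⟩) (cs.simple 0 * cs.simple 1)
  rw [map_mul, cs.lift_apply_simple, cs.lift_apply_simple, DihedralGroup.sr_mul_sr] at h
  simpa [DihedralGroup.orderOf_r_one] using h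

theorem simple_zero_mul_simple_one_ne_one : cs.simple 0 * cs.simple 1 ≠ 1 := by
  intro h
  have := cs.orderOf_simple_zero_mul_simple_one
  rw [h, orderOf_one] at this
  exact M.off_diagonal 0 1 (by decide) this.symm

theorem simple_zero_mul_zpow (j : ℤ) :
    cs.simple 0 * (cs.simple 0 * cs.simple 1) ^ j =
      (cs.simple 0 * cs.simple 1) ^ (-j) * cs.simple 0 := by
  have h : SemiconjBy (cs.simple 0) (cs.simple 0 * cs.simple 1) (cs.simple 0 * cs.simple 1)⁻¹ := by
    simp [SemiconjBy, cs.simple_mul_simple_cancel_left, mul_assoc]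
  rw [zpow_neg, ← inv_zpow]
  exact (h.zpow_right j).eq

theorem zpow_mul_simple_zero_mul (i : ℤ) :
    (cs.simple 0 * cs.simple 1) ^ i * cs.simple 0 * (cs.simple 0 * cs.simple 1) =
      (cs.simple 0 * cs.simple 1) ^ (i - 1) * cs.simple 0 := by
  have h := cs.simple_zero_mul_zpow 1
  rw [zpow_one, zpow_neg_one] at h
  rw [mul_assoc, h, ← mul_assoc, zpow_sub_one]

theorem isReflection_zpow_mul_simple_zero (i : ℤ) :
    cs.IsReflection ((cs.simple 0 * cs.simple 1) ^ i * cs.simple 0) := by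
  have shift : ∀ j m : ℤ, (cs.simple 0 * cs.simple 1) ^ j *
      ((cs.simple 0 * cs.simple 1) ^ m * cs.simple 0) * ((cs.simple 0 * cs.simple 1) ^ j)⁻¹ =
      (cs.simple 0 * cs.simple 1) ^ (2 * j + m) * cs.simple 0 := by
    intro j m
    rw [← zpow_neg, mul_assoc, mul_assoc, cs.simple_zero_mul_zpow, neg_neg]
    simp only [← mul_assoc, ← zpow_add]
    ring_nf
  obtain ⟨j, rfl | rfl⟩ := Int.even_or_odd' i
  · have h₀ : cs.IsReflection ((cs.simple 0 * cs.simple 1) ^ (0 : ℤ) * cs.simple 0) := by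
      simpa using cs.isReflection_simple 0
    simpa only [shift j 0, add_zero] using h₀.conj ((cs.simple 0 * cs.simple 1) ^ j)
  · have h₁ : cs.IsReflection ((cs.simple 0 * cs.simple 1) ^ (1 : ℤ) * cs.simple 0) := by
      simpa [cs.inv_simple, mul_assoc] using (cs.isReflection_simple 1).conj (cs.simple 0)
    simpa only [shift j 1] using h₁.conj ((cs.simple 0 * cs.simple 1) ^ j)

theorem exists_zpow_eq_or_zpow_mul_simple_zero_eq (w : W) :
    (∃ i : ℤ, (cs.simple 0 * cs.simple 1) ^ i = w) ∨
      ∃ i : ℤ, (cs.simple 0 * cs.simple 1) ^ i * cs.simple 0 = w := by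
  induction w using cs.simple_induction_right with
  | one => exact Or.inl ⟨0, zpow_zero _⟩
  | mul_simple_right w j ih =>
    fin_cases j <;> rcases ih with ⟨i, rfl⟩ | ⟨i, rfl⟩
    · exact Or.inr ⟨i, rfl⟩
    · exact Or.inl ⟨i, by simp [mul_assoc]⟩
    · exact Or.inr ⟨i - 1, by simp [zpow_sub, mul_assoc]⟩
    · exact Or.inl ⟨i + 1, by simp [zpow_add, mul_assoc]⟩

theorem not_isReflection_zpow (i : ℤ) : ¬ cs.IsReflection ((cs.simple 0 * cs.simple 1) ^ i) := by
  intro h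
  have := h.lengthParity_eq
  rw [map_zpow, map_mul, cs.lengthParity_simple, cs.lengthParity_simple,
    show Multiplicative.ofAdd (1 : ZMod 2) * Multiplicative.ofAdd 1 = 1 from rfl, one_zpow] at this
  exact absurd this (by decide)

theorem isReflection_iff_exists_zpow_mul_simple_zero {w : W} :
    cs.IsReflection w ↔ ∃ i : ℤ, (cs.simple 0 * cs.simple 1) ^ i * cs.simple 0 = w := by
  refine ⟨fun hw => ?_, fun ⟨i, hi⟩ => hi ▸ cs.isReflection_zpow_mul_simple_zero i⟩
  rcases cs.exists_zpow_eq_or_zpow_mul_simple_zero_eq w with ⟨i, rfl⟩ | h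
  · exact absurd hw (cs.not_isReflection_zpow i)
  · exact h

theorem nat_card_isReflection : Nat.card {t : W // cs.IsReflection t} = M 0 1 := by
  let e : Subgroup.zpowers (cs.simple 0 * cs.simple 1) ≃ {t : W // cs.IsReflection t} :=
    Equiv.ofBijective
      (fun x => ⟨x * cs.simple 0, by
        obtain ⟨i, hi⟩ := Subgroup.mem_zpowers_iff.mp x.2
        exact hi ▸ cs.isReflection_zpow_mul_simple_zero i⟩)
      ⟨fun x y hxy => Subtype.ext (mul_right_cancel (congrArg Subtype.val hxy)), fun t => by
        obtain ⟨i, hi⟩ := cs.isReflection_iff_exists_zpow_mul_simple_zero.mp t.2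
        exact ⟨⟨_, i, rfl⟩, Subtype.ext hi⟩⟩
  rw [← Nat.card_congr e, Nat.card_zpowers, orderOf_simple_zero_mul_simple_one]

theorem absLength_zpow {i : ℤ} (hi : (cs.simple 0 * cs.simple 1) ^ i ≠ 1) :
    cs.absLength ((cs.simple 0 * cs.simple 1) ^ i) = 2 := by
  have h := cs.absLength_mul_eq_two (cs.isReflection_zpow_mul_simple_zero i)
    (cs.isReflection_simple 0)
  rw [mul_assoc, cs.simple_mul_simple_self, mul_one] at h
  exact h hi (cs.not_isReflection_zpow i)

theorem absLe_simple_mul_simple_iff {w : W} :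
    cs.absLe w (cs.simple 0 * cs.simple 1) ↔
      w = 1 ∨ w = cs.simple 0 * cs.simple 1 ∨ cs.IsReflection w := by
  have hc : cs.absLength (cs.simple 0 * cs.simple 1) = 2 := by
    simpa using cs.absLength_zpow (i := 1) (by simpa using cs.simple_zero_mul_simple_one_ne_one)
  constructor
  · intro hw
    rcases cs.exists_zpow_eq_or_zpow_mul_simple_zero_eq w with ⟨i, rfl⟩ | ⟨i, rfl⟩
    · refine or_iff_not_imp_left.mpr fun hi => Or.inl ?_
      rwa [absLe, cs.absLength_zpow hi, hc, add_eq_left, absLength_eq_zero_iff,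
        inv_mul_eq_one] at hw
    · exact Or.inr (Or.inr (cs.isReflection_zpow_mul_simple_zero i))
  · rintro (rfl | rfl | hw)
    · exact cs.absLe_one_left _
    · exact cs.absLe_refl _
    · obtain ⟨i, rfl⟩ := cs.isReflection_iff_exists_zpow_mul_simple_zero.mp hw
      rw [absLe, hw.inv, cs.zpow_mul_simple_zero_mul, hc,
        cs.absLength_eq_one_iff.mpr hw,
        cs.absLength_eq_one_iff.mpr (cs.isReflection_zpow_mul_simple_zero _)]

theorem nat_card_absLe_simple_mul_simple (hM : M 0 1 ≠ 0) :
    Nat.card {w : W // cs.absLe w (cs.simple 0 * cs.simple 1)} = M 0 1 + 2 := by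
  have hfin : {t : W | cs.IsReflection t}.Finite := by
    rw [← Set.finite_coe_iff]
    exact Nat.finite_of_card_ne_zero (cs.nat_card_isReflection.trans_ne hM)
  have hset : {w : W | cs.absLe w (cs.simple 0 * cs.simple 1)} =
      insert 1 (insert (cs.simple 0 * cs.simple 1) {t | cs.IsReflection t}) :=
    Set.ext fun _ => cs.absLe_simple_mul_simple_iff
  have hc : cs.simple 0 * cs.simple 1 ∉ {t | cs.IsReflection t} := by
    simpa using cs.not_isReflection_zpow 1
  have h1 : (1 : W) ∉ insert (cs.simple 0 * cs.simple 1) {t | cs.IsReflection t} := by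
    simpa using ⟨cs.simple_zero_mul_simple_one_ne_one.symm, fun h => h.ne_one rfl⟩
  refine (Nat.card_coe_set_eq {w : W | cs.absLe w (cs.simple 0 * cs.simple 1)}).trans ?_
  rw [hset, Set.ncard_insert_of_notMem h1 (hfin.insert _),
    Set.ncard_insert_of_notMem hc hfin, ← Nat.card_coe_set_eq, Set.coe_ofPred,
    cs.nat_card_isReflection]

end Dihedral

end CoxeterSystem

/-- For the dihedral Coxeter group `W = I₂(k)` (with `k ≥ 2`, degrees `2, k` and Coxeter
number `h = k`), the interval `[1, c]` in absolute order below the Coxeter element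
`c = st` has exactly `Cat(I₂(k)) = k + 2` elements. -/
theorem dihedral_noncrossing_card {W : Type*} [Group W] (k : ℕ) (hk : 2 ≤ k)
    (cs : CoxeterSystem (I2Matrix k hk) W) (c : W)
    (hc : c = cs.simple 0 * cs.simple 1) :
    Nat.card {w : W // cs.absLe w c} = k + 2 := by
  subst hc
  exact cs.nat_card_absLe_simple_mul_simple (show k ≠ 0 by omega)
end
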